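/- arXiv:2307.10276 — 2 statements merged into one kernel-verified Lean document; each statement's English description precedes it below -/
import Mathlib

section
/- Under the alternative hypothesis θ₀ ≠ κ(μ₀), the test based on T_n is consistent: for every real constant c (in particular for c equal to the upper φ-quantile of the chi-square distribution with p+1 degrees of freedom), P(T_n ≥ c) → 1 as n → ∞. -/
/-!
The residual `κ(μ̂_n) − θ̂_n` converges almost surely to `d := κ(μ₀) − θ₀ ≠ 0`, and `Ŵ_n → W` in
probability, where `W = L V Lᴴ` with `L = [K, −1]` of full row rank is positive definite. Since
`(v, M) ↦ vᵀ M⁻¹ v` is continuous at `(d, W)`, with probability tending to one `T_n / n` exceeds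
`dᵀ W⁻¹ d / 2 > 0`, hence `T_n ≥ c` for large `n`.

Probabilities of events are handled through the outer measure, using only subadditivity and
continuity from below, which hold for arbitrary sets.
-/

open MeasureTheory ProbabilityTheory Filter Topology Matrix

/-- Convergence in distribution of a sequence of `E`-valued random elements to the law `ν`,
expressed through bounded continuous test functions. -/
def TendstoInDistribution {Ω E : Type*} [MeasurableSpace Ω] [TopologicalSpace E]
    [MeasurableSpace E] (P : Measure Ω) (X : ℕ → Ω → E) (ν : Measure E) : Prop :=
  ∀ f : BoundedContinuousFunction E ℝ,
    Tendsto (fun n => ∫ ω, f (X n ω) ∂P) atTop (𝓝 (∫ x, f x ∂ν))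

/-- `ν` is the centered Gaussian law on `ι → ℝ` with covariance matrix `C`, characterized
via one-dimensional projections (Cramér–Wold). -/
def IsCenteredGaussianLaw {ι : Type*} [Fintype ι] (ν : Measure (ι → ℝ))
    (C : Matrix ι ι ℝ) : Prop :=
  IsProbabilityMeasure ν ∧
    ∀ a : ι → ℝ, ν.map (fun x => ∑ i, a i * x i) =
      ProbabilityTheory.gaussianReal 0 (Real.toNNReal (a ⬝ᵥ C *ᵥ a))

/-- The chi-square distribution with `k` degrees of freedom: the law of the sum of squares
of `k` independent standard normal random variables. -/
noncomputable def chiSquareLaw (k : ℕ) : Measure ℝ :=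
  Measure.map (fun x : Fin k → ℝ => ∑ i, (x i) ^ 2)
    (Measure.pi fun _ : Fin k => ProbabilityTheory.gaussianReal 0 1)

namespace Matrix

variable {n 𝕜 : Type*} [Fintype n] [DecidableEq n]

-- The covariance of `K X - Y` when `(X, Y)` has covariance `V`.
theorem fromCols_neg_one_mul_mul_conjTranspose [CommRing 𝕜] [StarRing 𝕜]
    (K : Matrix n n 𝕜) (V : Matrix (n ⊕ n) (n ⊕ n) 𝕜) :
    fromCols K (-1 : Matrix n n 𝕜) * V * (fromCols K (-1 : Matrix n n 𝕜))ᴴ =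
      K * V.toBlocks₁₁ * Kᴴ - K * V.toBlocks₁₂ - V.toBlocks₂₁ * Kᴴ + V.toBlocks₂₂ := by
  rw [conjTranspose_fromCols_eq_fromRows_conjTranspose, conjTranspose_neg, conjTranspose_one]
  conv_lhs => rw [← fromBlocks_toBlocks V, fromCols_mul_fromBlocks, fromCols_mul_fromRows]
  noncomm_ring

open scoped ComplexOrder in
theorem PosDef.fromCols_neg_one_mul_mul_conjTranspose [RCLike 𝕜]
    {V : Matrix (n ⊕ n) (n ⊕ n) 𝕜} (hV : V.PosDef) (K : Matrix n n 𝕜) :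
    (fromCols K (-1 : Matrix n n 𝕜) * V * (fromCols K (-1 : Matrix n n 𝕜))ᴴ).PosDef := by
  refine hV.mul_mul_conjTranspose_same fun x y hxy => ?_
  funext j
  simpa [vecMul_neg] using congrFun hxy (Sum.inr j)

theorem continuousAt_dotProduct_inv_mulVec [NormedField 𝕜] {A : Matrix n n 𝕜}
    (hA : A.det ≠ 0) (v : n → 𝕜) :
    ContinuousAt (fun x : (n → 𝕜) × Matrix n n 𝕜 => x.1 ⬝ᵥ (x.2⁻¹ *ᵥ x.1)) (v, A) := by
  have hinv : ContinuousAt Inv.inv A := by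
    refine continuousAt_matrix_inv A ?_
    rw [Ring.inverse_eq_inv']
    exact continuousAt_inv₀ hA
  have hform : Continuous fun x : (n → 𝕜) × Matrix n n 𝕜 => x.1 ⬝ᵥ (x.2 *ᵥ x.1) :=
    continuous_fst.dotProduct (continuous_snd.matrix_mulVec continuous_fst)
  have hpair : ContinuousAt (fun x : (n → 𝕜) × Matrix n n 𝕜 => (x.1, x.2⁻¹)) (v, A) :=
    continuousAt_fst.prodMk (hinv.comp continuousAt_snd)
  exact hform.continuousAt.comp (f := fun x : (n → 𝕜) × Matrix n n 𝕜 => (x.1, x.2⁻¹)) hpair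

end Matrix

section OuterProbability

variable {Ω : Type*} [MeasurableSpace Ω] {μ : Measure Ω}

theorem tendsto_measure_one_of_eventually_subset [IsProbabilityMeasure μ] {ι : Type*}
    {l : Filter ι} {A B : ι → Set Ω} (hA : Tendsto (fun i => μ (A i)) l (𝓝 1))
    (hAB : ∀ᶠ i in l, A i ⊆ B i) : Tendsto (fun i => μ (B i)) l (𝓝 1) :=
  tendsto_of_tendsto_of_tendsto_of_le_of_le' hA tendsto_const_nhds
    (hAB.mono fun _ h => measure_mono h) (Eventually.of_forall fun _ => prob_le_one)

theorem tendsto_measure_inter_of_tendsto_measure_compl [IsProbabilityMeasure μ] {ι : Type*}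
    {l : Filter ι} {A B : ι → Set Ω} (hA : Tendsto (fun i => μ (A i)) l (𝓝 1))
    (hB : Tendsto (fun i => μ (B i)ᶜ) l (𝓝 0)) : Tendsto (fun i => μ (A i ∩ B i)) l (𝓝 1) := by
  have hlow : Tendsto (fun i => μ (A i) - μ (B i)ᶜ) l (𝓝 1) := by
    simpa using ENNReal.Tendsto.sub hA hB (Or.inl ENNReal.one_ne_top)
  refine tendsto_of_tendsto_of_tendsto_of_le_of_le hlow tendsto_const_nhds (fun i => ?_)
    (fun _ => prob_le_one)
  rw [tsub_le_iff_right]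
  calc μ (A i) ≤ μ (A i ∩ B i) + μ (A i \ B i) := measure_le_inter_add_sdiff _ _ _
    _ ≤ μ (A i ∩ B i) + μ (B i)ᶜ := by gcongr; exact Set.sdiff_subset_compl _ _

theorem tendsto_measure_prodMk_mem [IsProbabilityMeasure μ] {ι E F : Type*}
    [TopologicalSpace E] [TopologicalSpace F] {l : Filter ι} {X : ι → Ω → E} {Y : ι → Ω → F}
    {x : E} {y : F} (hX : ∀ U ∈ 𝓝 x, Tendsto (fun i => μ {ω | X i ω ∈ U}) l (𝓝 1))
    (hY : ∀ V ∈ 𝓝 y, Tendsto (fun i => μ {ω | Y i ω ∈ V}ᶜ) l (𝓝 0))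
    {S : Set (E × F)} (hS : S ∈ 𝓝 (x, y)) :
    Tendsto (fun i => μ {ω | (X i ω, Y i ω) ∈ S}) l (𝓝 1) := by
  obtain ⟨U, hU, V, hV, hUV⟩ := mem_nhds_prod_iff.1 hS
  exact tendsto_measure_one_of_eventually_subset
    (tendsto_measure_inter_of_tendsto_measure_compl (hX U hU) (hY V hV))
    (Eventually.of_forall fun _ _ hω => hUV ⟨hω.1, hω.2⟩)

theorem tendsto_measure_mem_of_ae_tendsto [IsProbabilityMeasure μ] {E : Type*}
    [TopologicalSpace E] {X : ℕ → Ω → E} {x : E}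
    (hX : ∀ᵐ ω ∂μ, Tendsto (fun n => X n ω) atTop (𝓝 x)) {U : Set E} (hU : U ∈ 𝓝 x) :
    Tendsto (fun n => μ {ω | X n ω ∈ U}) atTop (𝓝 1) := by
  set C : ℕ → Set Ω := fun n => {ω | ∀ m ≥ n, X m ω ∈ U}
  have hC : Monotone C := fun n k hnk ω hω m hm => hω m (hnk.trans hm)
  have hCfull : μ (⋃ n, C n) = 1 := by
    rw [← measure_univ (μ := μ)]
    refine measure_congr (ae_eq_univ.2 (measure_mono_null ?_ (MeasureTheory.ae_iff.1 hX)))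
    intro ω hω hconv
    obtain ⟨n, hn⟩ := eventually_atTop.1 (hconv hU)
    exact hω (Set.mem_iUnion.2 ⟨n, hn⟩)
  have hCtendsto := tendsto_measure_iUnion_atTop (μ := μ) hC
  rw [hCfull] at hCtendsto
  exact tendsto_measure_one_of_eventually_subset hCtendsto
    (Eventually.of_forall fun n _ hω => hω n le_rfl)

theorem tendsto_measure_compl_setOf_mem_of_entrywise {ι m n : Type*} [Fintype m] [Fintype n]
    {l : Filter ι} {M : ι → Ω → Matrix m n ℝ} {A : Matrix m n ℝ}
    (hM : ∀ i j, ∀ ε : ℝ, 0 < ε →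
      Tendsto (fun k => μ {ω | ε ≤ |M k ω i j - A i j|}) l (𝓝 0))
    {V : Set (Matrix m n ℝ)} (hV : V ∈ 𝓝 A) :
    Tendsto (fun k => μ {ω | M k ω ∈ V}ᶜ) l (𝓝 0) := by
  obtain ⟨ε, hε, hball⟩ := (Metric.mem_nhds_iff (α := m → n → ℝ) (s := V) (x := A)).1 hV
  have hsub : ∀ k, {ω | M k ω ∈ V}ᶜ ⊆ ⋃ i, ⋃ j, {ω | ε ≤ |M k ω i j - A i j|} := by
    intro k ω hω
    by_contra hclose
    simp only [Set.mem_iUnion, Set.mem_ofPred_eq, not_exists, not_le] at hclose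
    refine hω (hball ?_)
    refine (dist_pi_lt_iff hε).2 fun i => (dist_pi_lt_iff hε).2 fun j => ?_
    simpa only [Real.dist_eq] using hclose i j
  have hsum : Tendsto (fun k => ∑ i, ∑ j, μ {ω | ε ≤ |M k ω i j - A i j|}) l (𝓝 0) := by
    simpa using tendsto_finsetSum _ fun i _ => tendsto_finsetSum _ fun j _ => hM i j ε hε
  refine tendsto_of_tendsto_of_tendsto_of_le_of_le tendsto_const_nhds hsum (fun _ => zero_le)
    fun k => (measure_mono (hsub k)).trans ?_
  exact (measure_iUnion_fintype_le μ _).trans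
    (Finset.sum_le_sum fun i _ => measure_iUnion_fintype_le μ _)

theorem tendsto_measure_le_natCast_mul [IsProbabilityMeasure μ] {Q : ℕ → Ω → ℝ} {q : ℝ}
    (hq : 0 < q) (hQ : Tendsto (fun n => μ {ω | q < Q n ω}) atTop (𝓝 1)) (c : ℝ) :
    Tendsto (fun n => μ {ω | c ≤ n * Q n ω}) atTop (𝓝 1) := by
  refine tendsto_measure_one_of_eventually_subset hQ ?_
  filter_upwards [eventually_ge_atTop ⌈c / q⌉₊] with n hn ω hω
  calc c ≤ n * q := by
        rw [← div_le_iff₀ hq]; exact (Nat.le_ceil _).trans (Nat.cast_le.2 hn)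
    _ ≤ n * Q n ω := by gcongr; exact hω.le

end OuterProbability

theorem stmt_1_general
    {Ω : Type*} [MeasurableSpace Ω] (P : Measure Ω) [IsProbabilityMeasure P]
    (p : ℕ)
    (μ₀ θ₀ : Fin (p + 1) → ℝ)
    (muHat thetaHat : ℕ → Ω → Fin (p + 1) → ℝ)
    -- strong consistency of the estimators
    (hcons : ∀ᵐ ω ∂P, Tendsto (fun n => muHat n ω) atTop (𝓝 μ₀) ∧
      Tendsto (fun n => thetaHat n ω) atTop (𝓝 θ₀))
    -- asymptotic normality with symmetric positive definite asymptotic variance V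
    (V : Matrix (Fin (p + 1) ⊕ Fin (p + 1)) (Fin (p + 1) ⊕ Fin (p + 1)) ℝ)
    (hV : V.PosDef)
    -- the coordinatewise mean-variance functions κ and the derivative matrix K
    (κ : Fin (p + 1) → ℝ → ℝ)
    (hκdiff : ∀ i, ∃ s : Set ℝ, IsOpen s ∧ μ₀ i ∈ s ∧ ContDiffOn ℝ 1 (κ i) s)
    (K : Matrix (Fin (p + 1)) (Fin (p + 1)) ℝ)
    (hK : K = Matrix.diagonal fun i => deriv (κ i) (μ₀ i))
    (W : Matrix (Fin (p + 1)) (Fin (p + 1)) ℝ)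
    (hW : W = K * V.toBlocks₁₁ * K - K * V.toBlocks₁₂ - V.toBlocks₂₁ * K + V.toBlocks₂₂)
    -- consistent estimator of W
    (What : ℕ → Ω → Matrix (Fin (p + 1)) (Fin (p + 1)) ℝ)
    (hWhatCons : ∀ i j, ∀ ε : ℝ, 0 < ε →
      Tendsto (fun n => P {ω | ε ≤ |What n ω i j - W i j|}) atTop (𝓝 0))
    -- the alternative hypothesis
    (halt : ¬ ∀ i, θ₀ i = κ i (μ₀ i))
    -- the test statistic
    (T : ℕ → Ω → ℝ)
    (hT : ∀ n ω, T n ω = (n : ℝ) *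
      ((fun i => κ i (muHat n ω i) - thetaHat n ω i) ⬝ᵥ
        ((What n ω)⁻¹ *ᵥ fun i => κ i (muHat n ω i) - thetaHat n ω i))) :
    ∀ c : ℝ, Tendsto (fun n => P {ω | c ≤ T n ω}) atTop (𝓝 1) := by
  intro c
  set d : Fin (p + 1) → ℝ := fun i => κ i (μ₀ i) - θ₀ i
  have hd : d ≠ 0 := fun h => halt fun i => (sub_eq_zero.1 (congrFun h i)).symm
  have hresid : ∀ᵐ ω ∂P,
      Tendsto (fun n i => κ i (muHat n ω i) - thetaHat n ω i) atTop (𝓝 d) := by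
    filter_upwards [hcons] with ω ⟨hmu, htheta⟩
    refine tendsto_pi_nhds.2 fun i => ?_
    obtain ⟨s, hs, hμs, hκs⟩ := hκdiff i
    exact ((hκs.continuousOn.continuousAt (hs.mem_nhds hμs)).tendsto.comp
      (tendsto_pi_nhds.1 hmu i)).sub (tendsto_pi_nhds.1 htheta i)
  have hWpd : W.PosDef := by
    have hKH : Kᴴ = K := hK ▸ isHermitian_diagonal _
    have hLVL := hV.fromCols_neg_one_mul_mul_conjTranspose K
    rwa [fromCols_neg_one_mul_mul_conjTranspose, hKH, ← hW] at hLVL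
  have hq : 0 < d ⬝ᵥ (W⁻¹ *ᵥ d) := by
    simpa using hWpd.inv.dotProduct_mulVec_pos hd
  have hS := (continuousAt_dotProduct_inv_mulVec hWpd.det_pos.ne' d).preimage_mem_nhds
    (Ioi_mem_nhds (half_lt_self hq))
  have hQ := tendsto_measure_prodMk_mem (fun U hU => tendsto_measure_mem_of_ae_tendsto hresid hU)
    (fun N hN => tendsto_measure_compl_setOf_mem_of_entrywise hWhatCons hN) hS
  simpa only [hT] using tendsto_measure_le_natCast_mul (half_pos hq) hQ c

/-- Under the alternative hypothesis `θ₀ ≠ κ(μ₀)`, the test based on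
`T_n = n (κ(μ̂_n) − θ̂_n)ᵀ Ŵ_n⁻¹ (κ(μ̂_n) − θ̂_n)` is consistent: for every real constant `c`,
`P(T_n ≥ c) → 1` as `n → ∞`. -/
theorem stmt_1
    {Ω : Type*} [MeasurableSpace Ω] (P : Measure Ω) [IsProbabilityMeasure P]
    (p : ℕ) (hp : 1 ≤ p)
    (μ₀ θ₀ : Fin (p + 1) → ℝ)
    (muHat thetaHat : ℕ → Ω → Fin (p + 1) → ℝ)
    (hmuMeas : ∀ n, Measurable (muHat n)) (hthetaMeas : ∀ n, Measurable (thetaHat n))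
    -- strong consistency of the estimators
    (hcons : ∀ᵐ ω ∂P, Tendsto (fun n => muHat n ω) atTop (𝓝 μ₀) ∧
      Tendsto (fun n => thetaHat n ω) atTop (𝓝 θ₀))
    -- asymptotic normality with symmetric positive definite asymptotic variance V
    (V : Matrix (Fin (p + 1) ⊕ Fin (p + 1)) (Fin (p + 1) ⊕ Fin (p + 1)) ℝ)
    (hV : V.PosDef)
    (hCLT : ∃ ν, IsCenteredGaussianLaw ν V ∧
      TendstoInDistribution P
        (fun n ω => Sum.elim (fun i => Real.sqrt n * (muHat n ω i - μ₀ i))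
          (fun i => Real.sqrt n * (thetaHat n ω i - θ₀ i))) ν)
    -- the coordinatewise mean-variance functions κ and the derivative matrix K
    (κ : Fin (p + 1) → ℝ → ℝ) (hκmeas : ∀ i, Measurable (κ i))
    (hκdiff : ∀ i, ∃ s : Set ℝ, IsOpen s ∧ μ₀ i ∈ s ∧ ContDiffOn ℝ 1 (κ i) s)
    (K : Matrix (Fin (p + 1)) (Fin (p + 1)) ℝ)
    (hK : K = Matrix.diagonal fun i => deriv (κ i) (μ₀ i))
    (hKns : IsUnit K.det)
    (W : Matrix (Fin (p + 1)) (Fin (p + 1)) ℝ)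
    (hW : W = K * V.toBlocks₁₁ * K - K * V.toBlocks₁₂ - V.toBlocks₂₁ * K + V.toBlocks₂₂)
    -- consistent estimator of W
    (What : ℕ → Ω → Matrix (Fin (p + 1)) (Fin (p + 1)) ℝ)
    (hWhatMeas : ∀ n i j, Measurable fun ω => What n ω i j)
    (hWhatCons : ∀ i j, ∀ ε : ℝ, 0 < ε →
      Tendsto (fun n => P {ω | ε ≤ |What n ω i j - W i j|}) atTop (𝓝 0))
    -- the alternative hypothesis
    (halt : ¬ ∀ i, θ₀ i = κ i (μ₀ i))
    -- the test statistic
    (T : ℕ → Ω → ℝ)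
    (hT : ∀ n ω, T n ω = (n : ℝ) *
      ((fun i => κ i (muHat n ω i) - thetaHat n ω i) ⬝ᵥ
        ((What n ω)⁻¹ *ᵥ fun i => κ i (muHat n ω i) - thetaHat n ω i))) :
    ∀ c : ℝ, Tendsto (fun n => P {ω | c ≤ T n ω}) atTop (𝓝 1) :=
  stmt_1_general P p μ₀ θ₀ muHat thetaHat hcons V hV κ hκdiff K hK W hW What hWhatCons halt T hT
end

section
/- Let (Ω, F, P) be a probability space, G ⊆ F a sub-σ-algebra, X an ℝ^k-valued G-measurable random vector and ξ an integrable real random variable with E[‖X‖²·|ξ|] < ∞. Suppose E[ξ | G] < 0 almost surely, and suppose that for s ∈ ℝ^k, sᵀX = 0 almost surely implies s = 0. Then the matrix M := E[ξ · X Xᵀ] satisfies sᵀ M s < 0 for every nonzero s ∈ ℝ^k; in particular M is nonsingular. -/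
open MeasureTheory ProbabilityTheory Filter Topology Matrix
open Finset

/-! By the tower property and the pull-out property for the `G`-measurable weight `(sᵀX)²`,
`sᵀ M s = E[(sᵀX)² ξ] = E[(sᵀX)² E[ξ | G]]`. The integrand is `≤ 0` and, since `E[ξ | G] < 0` a.s.,
it vanishes a.s. only if `sᵀX = 0` a.s., which the identifiability hypothesis excludes for
`s ≠ 0`. A negative definite matrix has trivial kernel, hence is nonsingular. -/

lemma abs_mul_le_sum_sq {ι : Type*} [Fintype ι] (x : ι → ℝ) (i j : ι) :
    |x i * x j| ≤ ∑ l, x l ^ 2 := by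
  have hi := single_le_sum (fun l _ => sq_nonneg (x l)) (mem_univ i)
  have hj := single_le_sum (fun l _ => sq_nonneg (x l)) (mem_univ j)
  have h := two_mul_le_add_sq |x i| |x j|
  rw [sq_abs, sq_abs] at h
  rw [abs_mul]
  linarith

lemma Matrix.dotProduct_vecMulVec_self_mulVec {ι : Type*} [Fintype ι] (x s : ι → ℝ) :
    s ⬝ᵥ (vecMulVec x x *ᵥ s) = (s ⬝ᵥ x) ^ 2 := by
  rw [vecMulVec_mulVec, op_smul_eq_smul, dotProduct_smul, smul_eq_mul, dotProduct_comm x, sq]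

lemma Matrix.isUnit_det_of_dotProduct_mulVec_ne_zero {ι : Type*} [Fintype ι] [DecidableEq ι]
    {K : Type*} [Field K] {M : Matrix ι ι K} (hM : ∀ s ≠ 0, s ⬝ᵥ (M *ᵥ s) ≠ 0) :
    IsUnit M.det := by
  rw [isUnit_iff_ne_zero]
  intro hdet
  obtain ⟨s, hs, hMs⟩ := exists_mulVec_eq_zero_iff.mpr hdet
  exact hM s hs (by rw [hMs, dotProduct_zero])

section Integral

variable {Ω : Type*} [MeasurableSpace Ω] {μ : Measure Ω} {ι : Type*} [Fintype ι]

lemma integrable_mul_apply_mul_apply {X : Ω → ι → ℝ} {ξ : Ω → ℝ}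
    (hX : AEStronglyMeasurable X μ) (hξ : AEStronglyMeasurable ξ μ)
    (hXξ : Integrable (fun ω => (∑ l, X ω l ^ 2) * |ξ ω|) μ) (i j : ι) :
    Integrable (fun ω => ξ ω * (X ω i * X ω j)) μ := by
  have hXi : ∀ i, AEStronglyMeasurable (fun ω => X ω i) μ :=
    fun i => (continuous_apply i).comp_aestronglyMeasurable hX
  refine hXξ.mono' (hξ.mul ((hXi i).mul (hXi j))) (Eventually.of_forall fun ω => ?_)
  rw [Real.norm_eq_abs, abs_mul, mul_comm]
  exact mul_le_mul_of_nonneg_right (abs_mul_le_sum_sq (X ω) i j) (abs_nonneg _)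

lemma integrable_dotProduct_mulVec {A : Ω → Matrix ι ι ℝ}
    (hA : ∀ i j, Integrable (fun ω => A ω i j) μ) (s : ι → ℝ) :
    Integrable (fun ω => s ⬝ᵥ (A ω *ᵥ s)) μ := by
  simp only [dotProduct, mulVec]
  exact integrable_finsetSum _ fun i _ =>
    (integrable_finsetSum _ fun j _ => (hA i j).mul_const (s j)).const_mul (s i)

lemma dotProduct_mulVec_integral {A : Ω → Matrix ι ι ℝ}
    (hA : ∀ i j, Integrable (fun ω => A ω i j) μ) (s : ι → ℝ) :
    s ⬝ᵥ (of (fun i j => ∫ ω, A ω i j ∂μ) *ᵥ s) = ∫ ω, s ⬝ᵥ (A ω *ᵥ s) ∂μ := by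
  simp only [dotProduct, mulVec, of_apply]
  rw [integral_finsetSum _ fun i _ =>
    (integrable_finsetSum _ fun j _ => (hA i j).mul_const (s j)).const_mul (s i)]
  refine sum_congr rfl fun i _ => ?_
  rw [integral_const_mul, integral_finsetSum _ fun j _ => (hA i j).mul_const (s j)]
  simp only [integral_mul_const]

end Integral

lemma integral_mul_neg_of_condExp_neg {Ω : Type*} {m m0 : MeasurableSpace Ω} (hm : m ≤ m0)
    {μ : Measure Ω} [IsFiniteMeasure μ] {Z ξ : Ω → ℝ} (hZm : StronglyMeasurable[m] Z)
    (hZ : 0 ≤ᵐ[μ] Z) (hZ0 : ¬ Z =ᵐ[μ] 0) (hZξ : Integrable (Z * ξ) μ) (hξ : Integrable ξ μ)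
    (hneg : ∀ᵐ ω ∂μ, μ[ξ|m] ω < 0) :
    ∫ ω, Z ω * ξ ω ∂μ < 0 := by
  have hpull : μ[Z * ξ|m] =ᵐ[μ] Z * μ[ξ|m] := condExp_mul_of_stronglyMeasurable_left hZm hZξ hξ
  have htower : ∫ ω, Z ω * ξ ω ∂μ = ∫ ω, Z ω * μ[ξ|m] ω ∂μ := by
    rw [← integral_condExp hm]
    exact integral_congr_ae hpull
  set g : Ω → ℝ := fun ω => -(Z ω * μ[ξ|m] ω)
  have hg : 0 ≤ᵐ[μ] g := by
    filter_upwards [hZ, hneg] with ω hZω hω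
    exact neg_nonneg.mpr (mul_nonpos_of_nonneg_of_nonpos hZω hω.le)
  have hg0 : ¬ g =ᵐ[μ] 0 := by
    refine fun h => hZ0 ?_
    filter_upwards [h, hneg] with ω hω hξω
    simpa [g, hξω.ne] using hω
  have hgi : Integrable g μ := (integrable_condExp.congr hpull).neg
  have hpos : 0 < ∫ ω, g ω ∂μ := (integral_nonneg_of_ae hg).lt_of_ne fun h =>
    hg0 ((integral_eq_zero_iff_of_nonneg_ae hg hgi).mp h.symm)
  rw [htower]
  rw [integral_neg] at hpos
  linarith

theorem stmt_11_general
    {Ω : Type*} (G : MeasurableSpace Ω) [m0 : MeasurableSpace Ω]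
    (hG : G ≤ m0) (P : Measure Ω) [IsProbabilityMeasure P]
    (k : ℕ)
    (X : Ω → Fin k → ℝ) (hXmeas : Measurable[G] X)
    (ξ : Ω → ℝ) (hξint : Integrable ξ P)
    (hXξ : Integrable (fun ω => (∑ i, (X ω i) ^ 2) * |ξ ω|) P)
    (hneg : ∀ᵐ ω ∂P, (P[ξ | G]) ω < 0)
    (hnd : ∀ s : Fin k → ℝ, (∀ᵐ ω ∂P, (∑ i, s i * X ω i) = 0) → s = 0)
    (M : Matrix (Fin k) (Fin k) ℝ)
    (hM : ∀ i j, M i j = ∫ ω, ξ ω * X ω i * X ω j ∂P) :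
    (∀ s : Fin k → ℝ, s ≠ 0 → s ⬝ᵥ (M *ᵥ s) < 0) ∧ IsUnit M.det := by
  set A : Ω → Matrix (Fin k) (Fin k) ℝ := fun ω => ξ ω • vecMulVec (X ω) (X ω)
  have hA : ∀ i j, Integrable (fun ω => A ω i j) P :=
    integrable_mul_apply_mul_apply (hXmeas.mono hG le_rfl).aestronglyMeasurable
      hξint.aestronglyMeasurable hXξ
  have hMA : M = of fun i j => ∫ ω, A ω i j ∂P := by
    ext i j
    simp only [hM, A, of_apply, Matrix.smul_apply, vecMulVec_apply, smul_eq_mul, mul_assoc]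
  have hquad : ∀ s, ∀ ω, s ⬝ᵥ (A ω *ᵥ s) = (s ⬝ᵥ X ω) ^ 2 * ξ ω := fun s ω => by
    rw [smul_mulVec, dotProduct_smul, smul_eq_mul, dotProduct_vecMulVec_self_mulVec, mul_comm]
  have hdef : ∀ s ≠ 0, s ⬝ᵥ (M *ᵥ s) < 0 := by
    intro s hs
    have hint := integrable_dotProduct_mulVec hA s
    simp only [hquad] at hint
    rw [hMA, dotProduct_mulVec_integral hA]
    simp only [hquad]
    refine integral_mul_neg_of_condExp_neg hG ?_ (Eventually.of_forall fun ω => sq_nonneg _)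
      (fun h => hs (hnd s ?_)) hint hξint hneg
    · exact (((continuous_const.dotProduct continuous_id).pow 2).measurable.comp
        hXmeas).stronglyMeasurable
    · filter_upwards [h] with ω hω
      exact pow_eq_zero_iff two_ne_zero |>.mp hω
  exact ⟨hdef, isUnit_det_of_dotProduct_mulVec_ne_zero fun s hs => (hdef s hs).ne⟩

/-- Definiteness argument for the Hessian matrix in the M-estimation of the conditional
variance parameter: if `X` is `G`-measurable, `E[ξ | G] < 0` a.s., `E[‖X‖²·|ξ|] < ∞`, and
`sᵀX = 0` a.s. implies `s = 0`, then `M := E[ξ · X Xᵀ]` is negative definite, in particular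
nonsingular. -/
theorem stmt_11
    {Ω : Type*} (G : MeasurableSpace Ω) [m0 : MeasurableSpace Ω]
    (hG : G ≤ m0) (P : Measure Ω) [IsProbabilityMeasure P]
    (k : ℕ)
    (X : Ω → Fin k → ℝ) (hXmeas : Measurable[G] X)
    (ξ : Ω → ℝ) (hξmeas : Measurable ξ) (hξint : Integrable ξ P)
    (hXξ : Integrable (fun ω => (∑ i, (X ω i) ^ 2) * |ξ ω|) P)
    (hneg : ∀ᵐ ω ∂P, (P[ξ | G]) ω < 0)
    (hnd : ∀ s : Fin k → ℝ, (∀ᵐ ω ∂P, (∑ i, s i * X ω i) = 0) → s = 0)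
    (M : Matrix (Fin k) (Fin k) ℝ)
    (hM : ∀ i j, M i j = ∫ ω, ξ ω * X ω i * X ω j ∂P) :
    (∀ s : Fin k → ℝ, s ≠ 0 → s ⬝ᵥ (M *ᵥ s) < 0) ∧ IsUnit M.det :=
  stmt_11_general G (m0 := m0) hG P k X hXmeas ξ hξint hXξ hneg hnd M hM
end
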